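/- arXiv:2006.05150 — 7 statements merged into one kernel-verified Lean document; each statement's English description precedes it below -/
import Mathlib

section
/- Assume γ is of class C¹ and f₀ is differentiable. Then there exists a constant C ≥ 0 such that for every index i ≠ j, every N > 0 and every x ∈ [0,1]^m, the map f₁ = CP_γ(f₀, ∂_j, N) satisfies ‖∂_i f₁(x) − ∂_i f₀(x)‖ ≤ C/N. (Property (P₂) of the Corrugation Process.) -/
open MeasureTheory

/-- The average `γ̄(x) = ∫₀¹ γ(x,s) ds` of a loop family. -/
noncomputable def loopAverage {m n : ℕ}
    (γ : (Fin m → ℝ) → ℝ → EuclideanSpace ℝ (Fin n)) (x : Fin m → ℝ) :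
    EuclideanSpace ℝ (Fin n) :=
  ∫ s in (0:ℝ)..1, γ x s

/-- The Corrugation Process
`CP_γ(f₀, ∂_j, N)(x) = f₀(x) + (1/N) ∫₀^{N x_j} (γ(x,s) − γ̄(x)) ds`. -/
noncomputable def corrugationProcess {m n : ℕ}
    (f₀ : (Fin m → ℝ) → EuclideanSpace ℝ (Fin n))
    (γ : (Fin m → ℝ) → ℝ → EuclideanSpace ℝ (Fin n)) (j : Fin m) (N : ℝ) :
    (Fin m → ℝ) → EuclideanSpace ℝ (Fin n) :=
  fun x => f₀ x + N⁻¹ • ∫ s in (0:ℝ)..(N * x j), (γ x s - loopAverage γ x)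

/-! Write `f₁ x = f₀ x + N⁻¹ • Φ (x, N * x j)`, where `Φ = corrugationPrimitive γ` is
`Φ (x, t) = ∫₀ᵗ (γ x s - γ̄ x) ds`. Differentiation under the integral sign makes `Φ` of class `C¹`, and since `γ x · - γ̄ x` has
zero mean over a period, `Φ` is `1`-periodic in `t`; hence so is `DΦ`, which is therefore bounded
on `[0,1]^m × ℝ` by its maximum on the compact set `[0,1]^m × [0,1]`. For `i ≠ j` the direction
`eᵢ` does not move `N * x j`, so `∂ᵢ f₁ x - ∂ᵢ f₀ x = N⁻¹ • DΦ (x, N * x j) (eᵢ, 0)`. -/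

open Function Set

section ParametricIntegral

variable {H E : Type*} [NormedAddCommGroup H] [NormedSpace ℝ H] [ProperSpace H]
  [NormedAddCommGroup E] [NormedSpace ℝ E]

theorem contDiff_one_parametric_intervalIntegral {F : H → ℝ → E}
    (hF : ContDiff ℝ 1 fun p : H × ℝ => F p.1 p.2) (a b : ℝ) :
    ContDiff ℝ 1 fun x => ∫ s in a..b, F x s := by
  set F' : H → ℝ → H →L[ℝ] E := fun x s =>
    (fderiv ℝ (fun p : H × ℝ => F p.1 p.2) (x, s)).comp (ContinuousLinearMap.inl ℝ H ℝ)
  have hF'_cont : Continuous fun p : H × ℝ => F' p.1 p.2 :=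
    (hF.continuous_fderiv one_ne_zero).clm_comp continuous_const
  have hF_partial : ∀ x s, HasFDerivAt (fun y => F y s) (F' x s) x := fun x s =>
    (hF.differentiable one_ne_zero (x, s)).hasFDerivAt.comp (f := fun y : H => (y, s)) x
      (hasFDerivAt_prodMk_left x s)
  have hderiv : ∀ x₀, HasFDerivAt (fun x => ∫ s in a..b, F x s) (∫ s in a..b, F' x₀ s) x₀ := by
    intro x₀
    obtain ⟨M, hM⟩ := ((isCompact_closedBall x₀ 1).prod isCompact_uIcc).exists_bound_of_continuousOn
      hF'_cont.continuousOn
    have hF_slice : ∀ x, Continuous (F x) := fun x => hF.continuous.comp (.prodMk_right x)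
    exact intervalIntegral.hasFDerivAt_integral_of_dominated_of_fderiv_le
      (bound := fun _ => M) (Metric.ball_mem_nhds x₀ one_pos)
      (.of_forall fun x => (hF_slice x).aestronglyMeasurable) ((hF_slice x₀).intervalIntegrable a b)
      (hF'_cont.comp (.prodMk_right x₀)).aestronglyMeasurable
      (.of_forall fun s hs x hx =>
        hM (x, s) ⟨Metric.ball_subset_closedBall hx, uIoc_subset_uIcc hs⟩)
      intervalIntegrable_const (.of_forall fun s _ x _ => hF_partial x s)
  rw [contDiff_one_iff_fderiv]
  refine ⟨fun x => (hderiv x).differentiableAt, ?_⟩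
  rw [show fderiv ℝ _ = fun x => ∫ s in a..b, F' x s from funext fun x => (hderiv x).fderiv]
  exact intervalIntegral.continuous_parametric_intervalIntegral_of_continuous' hF'_cont a b

theorem contDiff_one_parametric_primitive {φ : H → ℝ → E}
    (hφ : ContDiff ℝ 1 fun p : H × ℝ => φ p.1 p.2) :
    ContDiff ℝ 1 fun p : H × ℝ => ∫ s in (0:ℝ)..p.2, φ p.1 s := by
  -- the substitution `s = t * u` moves `t` from the bound of integration into the integrand
  have hrescale : (fun p : H × ℝ => ∫ s in (0:ℝ)..p.2, φ p.1 s) =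
      fun p => p.2 • ∫ u in (0:ℝ)..1, φ p.1 (p.2 * u) := by
    ext p
    rw [intervalIntegral.smul_integral_comp_mul_left, mul_zero, mul_one]
  rw [hrescale]
  have hrescaled : ContDiff ℝ 1 fun q : (H × ℝ) × ℝ => φ q.1.1 (q.1.2 * q.2) :=
    hφ.comp (f := fun q : (H × ℝ) × ℝ => (q.1.1, q.1.2 * q.2)) (by fun_prop)
  exact contDiff_snd.smul <| contDiff_one_parametric_intervalIntegral hrescaled 0 1

end ParametricIntegral

theorem Function.Periodic.fderiv {𝕜 H E : Type*} [NontriviallyNormedField 𝕜]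
    [NormedAddCommGroup H] [NormedSpace 𝕜 H] [NormedAddCommGroup E] [NormedSpace 𝕜 E]
    {f : H → E} {c : H} (hf : Periodic f c) : Periodic (fderiv 𝕜 f) c := fun x => by
  rw [← fderiv_comp_add_right, show (fun y => f (y + c)) = f from funext hf]

theorem exists_bound_of_continuous_of_periodic_snd {X E : Type*} [TopologicalSpace X]
    [SeminormedAddCommGroup E] {g : X × ℝ → E} (hg : Continuous g)
    (hper : ∀ x, Periodic (fun t => g (x, t)) 1) {K : Set X} (hK : IsCompact K) :
    ∃ C, 0 ≤ C ∧ ∀ x ∈ K, ∀ t, ‖g (x, t)‖ ≤ C := by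
  obtain ⟨C, hC⟩ := (hK.prod isCompact_Icc).exists_bound_of_continuousOn hg.continuousOn
  refine ⟨max C 0, le_max_right _ _, fun x hx t => ?_⟩
  have hfract : g (x, t) = g (x, Int.fract t) := by
    rw [Int.fract, ← mul_one (⌊t⌋ : ℝ), (hper x).sub_int_mul_eq]
  rw [hfract]
  exact (hC _ ⟨hx, Int.fract_nonneg t, (Int.fract_lt_one t).le⟩).trans (le_max_left _ _)

section Corrugation

variable {m n : ℕ} {γ : (Fin m → ℝ) → ℝ → EuclideanSpace ℝ (Fin n)}

noncomputable def corrugationPrimitive (γ : (Fin m → ℝ) → ℝ → EuclideanSpace ℝ (Fin n))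
    (p : (Fin m → ℝ) × ℝ) : EuclideanSpace ℝ (Fin n) :=
  ∫ s in (0:ℝ)..p.2, (γ p.1 s - loopAverage γ p.1)

theorem contDiff_corrugationPrimitive (hγ : ContDiff ℝ 1 fun p : (Fin m → ℝ) × ℝ => γ p.1 p.2) :
    ContDiff ℝ 1 (corrugationPrimitive γ) := by
  set P := fun p : (Fin m → ℝ) × ℝ => ∫ s in (0:ℝ)..p.2, γ p.1 s
  have hP : ContDiff ℝ 1 P := contDiff_one_parametric_primitive hγ
  have hsplit : corrugationPrimitive γ = fun p => P p - p.2 • P (p.1, 1) := by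
    ext1 p
    have hint : IntervalIntegrable (γ p.1) volume 0 p.2 :=
      (hγ.continuous.comp (.prodMk_right p.1)).intervalIntegrable _ _
    simp only [corrugationPrimitive, loopAverage, P]
    rw [intervalIntegral.integral_sub hint intervalIntegrable_const,
      intervalIntegral.integral_const, sub_zero]
  rw [hsplit]
  exact hP.sub (contDiff_snd.smul (hP.comp (by fun_prop)))

theorem corrugationPrimitive_periodic (hγ : ContDiff ℝ 1 fun p : (Fin m → ℝ) × ℝ => γ p.1 p.2)
    (hγ_per : ∀ x t, γ x (t + 1) = γ x t) : Periodic (corrugationPrimitive γ) (0, 1) := by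
  rintro ⟨x, t⟩
  have hslice : Continuous (γ x) := hγ.continuous.comp (.prodMk_right x)
  have hcont : Continuous fun s => γ x s - loopAverage γ x := hslice.sub continuous_const
  have hloop : Periodic (fun s => γ x s - loopAverage γ x) 1 := fun s => by
    simp only [hγ_per]
  have hmean_zero : ∫ s in t..t + 1, (γ x s - loopAverage γ x) = 0 := by
    rw [hloop.intervalIntegral_add_eq t 0, zero_add,
      intervalIntegral.integral_sub (hslice.intervalIntegrable _ _) intervalIntegrable_const,
      intervalIntegral.integral_const, sub_zero, one_smul, loopAverage, sub_self]
  simp only [corrugationPrimitive, Prod.mk_add_mk, add_zero]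
  rw [← intervalIntegral.integral_add_adjacent_intervals (hcont.intervalIntegrable 0 t)
    (hcont.intervalIntegrable t (t + 1)), hmean_zero, add_zero]

theorem fderiv_corrugationProcess_apply {f₀ : (Fin m → ℝ) → EuclideanSpace ℝ (Fin n)} {j : Fin m}
    {N : ℝ} {x v : Fin m → ℝ} (hf₀ : DifferentiableAt ℝ f₀ x)
    (hγ : ContDiff ℝ 1 fun p : (Fin m → ℝ) × ℝ => γ p.1 p.2) (hv : v j = 0) :
    fderiv ℝ (corrugationProcess f₀ γ j N) x v =
      fderiv ℝ f₀ x v + N⁻¹ • fderiv ℝ (corrugationPrimitive γ) (x, N * x j) (v, 0) := by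
  have hΦ : HasFDerivAt (corrugationPrimitive γ) (fderiv ℝ (corrugationPrimitive γ) (x, N * x j))
      (x, N * x j) :=
    ((contDiff_corrugationPrimitive hγ).differentiable one_ne_zero _).hasFDerivAt
  have hlift : HasFDerivAt (fun y : Fin m → ℝ => (y, N * y j))
      ((ContinuousLinearMap.id ℝ _).prod (N • ContinuousLinearMap.proj j)) x :=
    (hasFDerivAt_id x).prodMk
      ((ContinuousLinearMap.proj j : (Fin m → ℝ) →L[ℝ] ℝ).hasFDerivAt.const_mul N)
  have hf₁ : HasFDerivAt (corrugationProcess f₀ γ j N) _ x :=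
    hf₀.hasFDerivAt.add ((hΦ.comp x hlift).const_smul N⁻¹)
  rw [hf₁.fderiv]
  simp [hv]

end Corrugation

theorem corrugationProcess_P2_general {m n : ℕ} (j : Fin m)
    (f₀ : (Fin m → ℝ) → EuclideanSpace ℝ (Fin n))
    (γ : (Fin m → ℝ) → ℝ → EuclideanSpace ℝ (Fin n))
    (hγ_C1 : ContDiff ℝ 1 fun p : (Fin m → ℝ) × ℝ => γ p.1 p.2)
    (hγ_per : ∀ x t, γ x (t + 1) = γ x t)
    (hf₀ : Differentiable ℝ f₀) :
    ∃ C : ℝ, 0 ≤ C ∧ ∀ i : Fin m, i ≠ j → ∀ N : ℝ, 0 < N → ∀ x : Fin m → ℝ,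
      (∀ i', x i' ∈ Set.Icc (0:ℝ) 1) →
      ‖fderiv ℝ (corrugationProcess f₀ γ j N) x (Pi.single i 1)
        - fderiv ℝ f₀ x (Pi.single i 1)‖ ≤ C / N := by
  have hDΦ_per : ∀ x, Periodic (fun t => fderiv ℝ (corrugationPrimitive γ) (x, t)) 1 :=
    fun x t => by simpa using (corrugationPrimitive_periodic hγ_C1 hγ_per).fderiv (𝕜 := ℝ) (x, t)
  obtain ⟨C, hC₀, hC⟩ := exists_bound_of_continuous_of_periodic_snd
    ((contDiff_corrugationPrimitive hγ_C1).continuous_fderiv one_ne_zero) hDΦ_per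
    (isCompact_univ_pi fun _ => isCompact_Icc)
  refine ⟨C, hC₀, fun i hij N hN x hx => ?_⟩
  have hunit : ‖((Pi.single i 1 : Fin m → ℝ), (0 : ℝ))‖ ≤ 1 := by
    simp [Prod.norm_def, Pi.norm_single]
  rw [fderiv_corrugationProcess_apply (hf₀ x) hγ_C1 (Pi.single_eq_of_ne hij.symm 1),
    add_sub_cancel_left, norm_smul, Real.norm_of_nonneg (inv_nonneg.2 hN.le), inv_mul_eq_div]
  gcongr
  exact (ContinuousLinearMap.le_of_opNorm_le_of_le _ (hC x (mem_univ_pi.2 hx) _) hunit).trans_eq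
    (mul_one C)

/-- Property (P₂) of the Corrugation Process: for `i ≠ j`,
`‖∂_i f₁ − ∂_i f₀‖_{C⁰} = O(1/N)` on `[0,1]^m`. -/
theorem corrugationProcess_P2 {m n : ℕ} (hm : 1 ≤ m) (hn : 1 ≤ n) (j : Fin m)
    (f₀ : (Fin m → ℝ) → EuclideanSpace ℝ (Fin n))
    (γ : (Fin m → ℝ) → ℝ → EuclideanSpace ℝ (Fin n))
    (hγ_C1 : ContDiff ℝ 1 fun p : (Fin m → ℝ) × ℝ => γ p.1 p.2)
    (hγ_per : ∀ x t, γ x (t + 1) = γ x t)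
    (hf₀ : Differentiable ℝ f₀) :
    ∃ C : ℝ, 0 ≤ C ∧ ∀ i : Fin m, i ≠ j → ∀ N : ℝ, 0 < N → ∀ x : Fin m → ℝ,
      (∀ i', x i' ∈ Set.Icc (0:ℝ) 1) →
      ‖fderiv ℝ (corrugationProcess f₀ γ j N) x (Pi.single i 1)
        - fderiv ℝ f₀ x (Pi.single i 1)‖ ≤ C / N :=
  corrugationProcess_P2_general j f₀ γ hγ_C1 hγ_per hf₀
end

section
/- Assume γ is of class C¹, f₀ is differentiable, and ∂_j f₀(x) = γ̄(x) for every x ∈ ℝ^m. Then there exists a constant C ≥ 0 such that for every N > 0 and every x ∈ [0,1]^m, the map f₁ = CP_γ(f₀, ∂_j, N) satisfies ‖∂_j f₁(x) − γ(x, N·x_j)‖ ≤ C/N. (Property (P₃) of the Corrugation Process: ∂_j f₁(x) = γ(x, N x_j) + O(1/N).) -/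
/-!
Put `G(x, t) = ∫₀ᵗ (γ(x, s) - γ̄(x)) ds`, so that `f₁(x) = f₀(x) + G(x, N xⱼ) / N`. Since
`γ(x, ·) - γ̄(x)` has mean zero over a period, `G` is `1`-periodic in `t`, and so is its (continuous)
derivative. The chain rule gives
`∂ⱼ f₁(x) = ∂ⱼ f₀(x) + ∂ₜG(x, N xⱼ) + ∂ₓG(x, N xⱼ) eⱼ / N = γ(x, N xⱼ) + ∂ₓG(x, N xⱼ) eⱼ / N`,
and the last term is `O(1/N)` because a continuous function which is periodic in `t` is bounded on
`[0,1]^m × ℝ`.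
-/

open MeasureTheory

open Function

section ParametricPrimitive

variable {H E : Type*} [NormedAddCommGroup H] [NormedSpace ℝ H]
  [NormedAddCommGroup E] [NormedSpace ℝ E]

theorem ContDiff.continuous_fderiv_comp_inl {K : Type*} [NormedAddCommGroup K] [NormedSpace ℝ K]
    {f : H × K → E} (hf : ContDiff ℝ 1 f) :
    Continuous fun p => fderiv ℝ f p ∘L .inl ℝ H K :=
  (hf.continuous_fderiv one_ne_zero).clm_comp continuous_const

variable {F : H → ℝ → E}

theorem hasFDerivAt_intervalIntegral_of_contDiff [ProperSpace H] (hF : ContDiff ℝ 1 (uncurry F))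
    (a b : ℝ) (x₀ : H) :
    HasFDerivAt (fun x => ∫ s in a..b, F x s)
      (∫ s in a..b, fderiv ℝ (uncurry F) (x₀, s) ∘L .inl ℝ H ℝ) x₀ := by
  obtain ⟨M, hM⟩ := ((isCompact_closedBall x₀ 1).prod isCompact_uIcc).exists_bound_of_continuousOn
    hF.continuous_fderiv_comp_inl.continuousOn
  refine intervalIntegral.hasFDerivAt_integral_of_dominated_of_fderiv_le
    (μ := volume) (bound := fun _ => M)
    (F' := fun x s => fderiv ℝ (uncurry F) (x, s) ∘L .inl ℝ H ℝ)
    (Metric.ball_mem_nhds x₀ one_pos) (.of_forall fun x => ?_) ?_ ?_ ?_ intervalIntegrable_const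
    (.of_forall fun s _ x _ => ?_)
  · exact (hF.continuous.uncurry_left x).aestronglyMeasurable
  · exact (hF.continuous.uncurry_left x₀).intervalIntegrable a b
  · exact (hF.continuous_fderiv_comp_inl.comp (Continuous.prodMk_right x₀)).aestronglyMeasurable
  · exact .of_forall fun s hs x hx =>
      hM (x, s) ⟨Metric.ball_subset_closedBall hx, Set.uIoc_subset_uIcc hs⟩
  · exact ((hF.differentiable one_ne_zero) (x, s)).hasFDerivAt.comp x (f := (·, s))
      (hasFDerivAt_prodMk_left x s)

theorem hasStrictFDerivAt_parametric_primitive_of_contDiff [ProperSpace H] [CompleteSpace E]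
    (hF : ContDiff ℝ 1 (uncurry F)) (a : ℝ) (p : H × ℝ) :
    HasStrictFDerivAt (fun q : H × ℝ => ∫ s in a..q.2, F q.1 s)
      ((∫ s in a..p.2, fderiv ℝ (uncurry F) (p.1, s) ∘L .inl ℝ H ℝ).coprod
        (.toSpanSingleton ℝ (F p.1 p.2))) p := by
  refine hasStrictFDerivAt_uncurry_coprod (f := fun x t => ∫ s in a..t, F x s)
    (f₁ := fun x t => ∫ s in a..t, fderiv ℝ (uncurry F) (x, s) ∘L .inl ℝ H ℝ)
    (f₂ := fun x t => .toSpanSingleton ℝ (F x t))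
    (.of_forall fun q => hasFDerivAt_intervalIntegral_of_contDiff hF a q.2 q.1)
    (.of_forall fun q => ?_) ?_ ?_
  · exact ((hF.continuous.uncurry_left q.1).integral_hasStrictDerivAt a q.2).hasDerivAt.hasFDerivAt
  · exact (intervalIntegral.continuous_parametric_primitive_of_continuous
      (f := fun x s => fderiv ℝ (uncurry F) (x, s) ∘L .inl ℝ H ℝ)
      hF.continuous_fderiv_comp_inl).continuousAt
  · exact ((ContinuousLinearMap.toSpanSingletonCLE (𝕜 := ℝ) (E := E)).continuous.comp
      hF.continuous).continuousAt

theorem contDiff_parametric_primitive_of_contDiff [ProperSpace H] [CompleteSpace E]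
    (hF : ContDiff ℝ 1 (uncurry F)) (a : ℝ) :
    ContDiff ℝ 1 fun q : H × ℝ => ∫ s in a..q.2, F q.1 s := by
  refine contDiff_one_iff_hasFDerivAt.2
    ⟨_, ?_, fun p => (hasStrictFDerivAt_parametric_primitive_of_contDiff hF a p).hasFDerivAt⟩
  exact (ContinuousLinearMap.coprodEquivL (S := ℝ)).continuous.comp
    ((intervalIntegral.continuous_parametric_primitive_of_continuous
      (f := fun x s => fderiv ℝ (uncurry F) (x, s) ∘L .inl ℝ H ℝ)
      hF.continuous_fderiv_comp_inl).prodMk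
      ((ContinuousLinearMap.toSpanSingletonCLE (𝕜 := ℝ) (E := E)).continuous.comp hF.continuous))

theorem fderiv_parametric_primitive_apply_zero_one [ProperSpace H] [CompleteSpace E]
    (hF : ContDiff ℝ 1 (uncurry F)) (a : ℝ) (p : H × ℝ) :
    fderiv ℝ (fun q : H × ℝ => ∫ s in a..q.2, F q.1 s) p (0, 1) = F p.1 p.2 := by
  simp [(hasStrictFDerivAt_parametric_primitive_of_contDiff hF a p).hasFDerivAt.fderiv]

end ParametricPrimitive

theorem exists_norm_le_of_periodic {X F : Type*} [TopologicalSpace X] [SeminormedAddCommGroup F]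
    {φ : X × ℝ → F} (hφ : Continuous φ) (hper : ∀ x t, φ (x, t + 1) = φ (x, t)) {K : Set X}
    (hK : IsCompact K) : ∃ C, 0 ≤ C ∧ ∀ x ∈ K, ∀ t, ‖φ (x, t)‖ ≤ C := by
  obtain ⟨C, hC⟩ := (hK.prod (isCompact_Icc (a := (0 : ℝ)) (b := 1))).exists_bound_of_continuousOn
    hφ.continuousOn
  refine ⟨max C 0, le_max_right _ _, fun x hx t => ?_⟩
  have hfract : φ (x, Int.fract t) = φ (x, t) := by
    have := Periodic.sub_int_mul_eq (f := fun t => φ (x, t)) (x := t) (hper x) ⌊t⌋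
    rwa [mul_one] at this
  rw [← hfract]
  exact (hC _ ⟨hx, Int.fract_nonneg t, (Int.fract_lt_one t).le⟩).trans (le_max_left _ _)

section LoopPrimitive

variable {m n : ℕ} {γ : (Fin m → ℝ) → ℝ → EuclideanSpace ℝ (Fin n)}

noncomputable def loopPrimitive (γ : (Fin m → ℝ) → ℝ → EuclideanSpace ℝ (Fin n))
    (x : Fin m → ℝ) (t : ℝ) : EuclideanSpace ℝ (Fin n) :=
  ∫ s in (0:ℝ)..t, (γ x s - loopAverage γ x)

theorem contDiff_loopAverage (hγ : ContDiff ℝ 1 (uncurry γ)) : ContDiff ℝ 1 (loopAverage γ) :=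
  (contDiff_parametric_primitive_of_contDiff hγ 0).comp (contDiff_id.prodMk contDiff_const)

theorem contDiff_uncurry_sub_loopAverage (hγ : ContDiff ℝ 1 (uncurry γ)) :
    ContDiff ℝ 1 (uncurry fun x s => γ x s - loopAverage γ x) :=
  hγ.sub ((contDiff_loopAverage hγ).comp contDiff_fst)

theorem contDiff_loopPrimitive (hγ : ContDiff ℝ 1 (uncurry γ)) :
    ContDiff ℝ 1 (uncurry (loopPrimitive γ)) :=
  contDiff_parametric_primitive_of_contDiff (contDiff_uncurry_sub_loopAverage hγ) 0

theorem fderiv_loopPrimitive_apply_zero_one (hγ : ContDiff ℝ 1 (uncurry γ)) (x : Fin m → ℝ)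
    (t : ℝ) : fderiv ℝ (uncurry (loopPrimitive γ)) (x, t) (0, 1) = γ x t - loopAverage γ x :=
  fderiv_parametric_primitive_apply_zero_one (contDiff_uncurry_sub_loopAverage hγ) 0 (x, t)

theorem loopPrimitive_add_one (hγ : Continuous (uncurry γ)) (hper : ∀ x t, γ x (t + 1) = γ x t)
    (x : Fin m → ℝ) (t : ℝ) : loopPrimitive γ x (t + 1) = loopPrimitive γ x t := by
  have hper' : Periodic (fun s => γ x s - loopAverage γ x) 1 := fun s => by simp [hper]
  have hint : ∀ a b, IntervalIntegrable (fun s => γ x s - loopAverage γ x) volume a b :=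
    fun a b => ((hγ.uncurry_left x).sub continuous_const).intervalIntegrable a b
  have hmean : ∫ s in (0:ℝ)..1, (γ x s - loopAverage γ x) = 0 := by
    rw [intervalIntegral.integral_sub ((hγ.uncurry_left x).intervalIntegrable 0 1)
      intervalIntegrable_const, intervalIntegral.integral_const]
    simp [loopAverage]
  have := hper'.intervalIntegral_add_eq_add 0 t hint
  rwa [zero_add, hmean, add_zero] at this

theorem fderiv_loopPrimitive_add_one (hγ : Continuous (uncurry γ))
    (hper : ∀ x t, γ x (t + 1) = γ x t) (x : Fin m → ℝ) (t : ℝ) :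
    fderiv ℝ (uncurry (loopPrimitive γ)) (x, t + 1) =
      fderiv ℝ (uncurry (loopPrimitive γ)) (x, t) := by
  have hshift : (fun q : (Fin m → ℝ) × ℝ => uncurry (loopPrimitive γ) (q + (0, 1)))
      = uncurry (loopPrimitive γ) :=
    funext fun q => by
      simpa only [uncurry, Prod.fst_add, Prod.snd_add, add_zero]
        using loopPrimitive_add_one hγ hper q.1 q.2
  rw [show ((x, t + 1) : (Fin m → ℝ) × ℝ) = (x, t) + (0, 1) by simp, ← fderiv_comp_add_right,
    hshift]

theorem fderiv_corrugationProcess_apply_single {f₀ : (Fin m → ℝ) → EuclideanSpace ℝ (Fin n)}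
    {j : Fin m} {N : ℝ} {x : Fin m → ℝ} (hγ : ContDiff ℝ 1 (uncurry γ))
    (hf₀ : DifferentiableAt ℝ f₀ x) (hN : N ≠ 0) :
    fderiv ℝ (corrugationProcess f₀ γ j N) x (Pi.single j 1) =
      fderiv ℝ f₀ x (Pi.single j 1)
        + N⁻¹ • fderiv ℝ (uncurry (loopPrimitive γ)) (x, N * x j) (Pi.single j 1, 0)
        + (γ x (N * x j) - loopAverage γ x) := by
  set G := uncurry (loopPrimitive γ)
  have hG : HasFDerivAt G (fderiv ℝ G (x, N * x j)) (x, N * x j) :=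
    ((contDiff_loopPrimitive hγ).differentiable one_ne_zero _).hasFDerivAt
  have hlift : HasFDerivAt (fun y : Fin m → ℝ => (y, N * y j))
      ((ContinuousLinearMap.id ℝ _).prod (N • ContinuousLinearMap.proj j)) x :=
    (hasFDerivAt_id x).prodMk ((hasFDerivAt_apply j x).const_mul N)
  have h : HasFDerivAt (fun y => f₀ y + N⁻¹ • G (y, N * y j)) _ x :=
    hf₀.hasFDerivAt.add ((hG.comp x hlift).const_smul N⁻¹)
  rw [show corrugationProcess f₀ γ j N = fun y => f₀ y + N⁻¹ • G (y, N * y j) from rfl, h.fderiv]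
  have hsplit : ((Pi.single j 1, N) : (Fin m → ℝ) × ℝ) = (Pi.single j 1, 0) + N • (0, 1) := by
    ext <;> simp
  simp only [add_apply, smul_apply,
    ContinuousLinearMap.comp_apply, ContinuousLinearMap.prod_apply, ContinuousLinearMap.id_apply,
    ContinuousLinearMap.proj_apply, Pi.single_eq_same, smul_eq_mul, mul_one]
  rw [hsplit, map_add, map_smul, fderiv_loopPrimitive_apply_zero_one hγ, smul_add, smul_smul,
    inv_mul_cancel₀ hN, one_smul, add_assoc]

end LoopPrimitive

theorem corrugationProcess_P3_general {m n : ℕ} (j : Fin m)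
    (f₀ : (Fin m → ℝ) → EuclideanSpace ℝ (Fin n))
    (γ : (Fin m → ℝ) → ℝ → EuclideanSpace ℝ (Fin n))
    (hγ_C1 : ContDiff ℝ 1 fun p : (Fin m → ℝ) × ℝ => γ p.1 p.2)
    (hγ_per : ∀ x t, γ x (t + 1) = γ x t)
    (hf₀ : Differentiable ℝ f₀)
    (havg : ∀ x : Fin m → ℝ, fderiv ℝ f₀ x (Pi.single j 1) = loopAverage γ x) :
    ∃ C : ℝ, 0 ≤ C ∧ ∀ N : ℝ, 0 < N → ∀ x : Fin m → ℝ,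
      (∀ i, x i ∈ Set.Icc (0:ℝ) 1) →
      ‖fderiv ℝ (corrugationProcess f₀ γ j N) x (Pi.single j 1)
        - γ x (N * x j)‖ ≤ C / N := by
  obtain ⟨C, hC₀, hC⟩ := exists_norm_le_of_periodic
    (φ := fun p => fderiv ℝ (uncurry (loopPrimitive γ)) p (Pi.single j 1, 0))
    (((contDiff_loopPrimitive hγ_C1).continuous_fderiv one_ne_zero).clm_apply continuous_const)
    (fun x t => by simp only [fderiv_loopPrimitive_add_one hγ_C1.continuous hγ_per])
    (isCompact_Icc (a := (0 : Fin m → ℝ)) (b := 1))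
  refine ⟨C, hC₀, fun N hN x hx => ?_⟩
  rw [fderiv_corrugationProcess_apply_single hγ_C1 (hf₀ x) hN.ne', havg,
    show ∀ a b c : EuclideanSpace ℝ (Fin n), a + b + (c - a) - c = b from fun _ _ _ => by abel,
    norm_smul, norm_inv, Real.norm_of_nonneg hN.le, inv_mul_eq_div]
  exact div_le_div_of_nonneg_right (hC x ⟨fun i => (hx i).1, fun i => (hx i).2⟩ _) hN.le

/-- Property (P₃) of the Corrugation Process: if `∂_j f₀ = γ̄` then
`∂_j f₁(x) = γ(x, N x_j) + O(1/N)` on `[0,1]^m`. -/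
theorem corrugationProcess_P3 {m n : ℕ} (hm : 1 ≤ m) (hn : 1 ≤ n) (j : Fin m)
    (f₀ : (Fin m → ℝ) → EuclideanSpace ℝ (Fin n))
    (γ : (Fin m → ℝ) → ℝ → EuclideanSpace ℝ (Fin n))
    (hγ_C1 : ContDiff ℝ 1 fun p : (Fin m → ℝ) × ℝ => γ p.1 p.2)
    (hγ_per : ∀ x t, γ x (t + 1) = γ x t)
    (hf₀ : Differentiable ℝ f₀)
    (havg : ∀ x : Fin m → ℝ, fderiv ℝ f₀ x (Pi.single j 1) = loopAverage γ x) :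
    ∃ C : ℝ, 0 ≤ C ∧ ∀ N : ℝ, 0 < N → ∀ x : Fin m → ℝ,
      (∀ i, x i ∈ Set.Icc (0:ℝ) 1) →
      ‖fderiv ℝ (corrugationProcess f₀ γ j N) x (Pi.single j 1)
        - γ x (N * x j)‖ ≤ C / N :=
  corrugationProcess_P3_general j f₀ γ hγ_C1 hγ_per hf₀ havg
end

section
/- Assume g(a, b) = ⟨L a, L b⟩ for all a, b ∈ ℝ^m. Then for v ∈ ℝⁿ, the map L_v satisfies g(w₁, w₂) = ⟨L_v w₁, L_v w₂⟩ for all w₁, w₂ ∈ ℝ^m if and only if ⟨v, v⟩ = g(u, u) and ⟨v − L(u), L(a)⟩ = 0 for every a ∈ ker λ. In other words, the slice of the isometric relation is the intersection of the sphere S_u = {v ∈ ℝⁿ : ‖v‖² = g(u,u)} with the affine plane P_u = L(u) + L(ker λ)^⊥. -/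
open scoped RealInnerProductSpace

/-- With `g = L*⟨·,·⟩` and `L_v = L + (v − L(u)) ⊗ λ`, the map `L_v` is `g`-isometric if and
only if `⟨v,v⟩ = g(u,u)` and `v − L(u)` is orthogonal to `L(ker λ)`; i.e. the slice of the
isometric relation is `S_u ∩ P_u` where `S_u = {v : ‖v‖² = g(u,u)}` and
`P_u = L(u) + L(ker λ)^⊥`. -/
theorem slice_isometric_iff {m n : ℕ}
    (g : EuclideanSpace ℝ (Fin m) →ₗ[ℝ] EuclideanSpace ℝ (Fin m) →ₗ[ℝ] ℝ)
    (hg_symm : ∀ a b, g a b = g b a)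
    (L : EuclideanSpace ℝ (Fin m) →ₗ[ℝ] EuclideanSpace ℝ (Fin n))
    (lam : EuclideanSpace ℝ (Fin m) →ₗ[ℝ] ℝ)
    (u : EuclideanSpace ℝ (Fin m)) (hu : lam u = 1)
    (hiso : ∀ a b, g a b = ⟪L a, L b⟫)
    (v : EuclideanSpace ℝ (Fin n)) :
    (∀ w₁ w₂ : EuclideanSpace ℝ (Fin m),
        g w₁ w₂ = ⟪L w₁ + lam w₁ • (v - L u), L w₂ + lam w₂ • (v - L u)⟫)
      ↔ (⟪v, v⟫ = g u u ∧ ∀ a : EuclideanSpace ℝ (Fin m), lam a = 0 → ⟪v - L u, L a⟫ = 0) := by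
  set d := v - L u with hd
  have expand : ∀ w₁ w₂ : EuclideanSpace ℝ (Fin m),
      ⟪L w₁ + lam w₁ • d, L w₂ + lam w₂ • d⟫ =
      ⟪L w₁, L w₂⟫ + lam w₂ * ⟪d, L w₁⟫ + lam w₁ * ⟪d, L w₂⟫
        + lam w₁ * lam w₂ * ⟪d, d⟫ := by
    intro w₁ w₂
    simp only [inner_add_left, inner_add_right, real_inner_smul_left, real_inner_smul_right,
      real_inner_comm (L w₁) d]
    ring
  have hvv : ⟪v, v⟫ = ⟪L u, L u⟫ + 2 * ⟪d, L u⟫ + ⟪d, d⟫ := by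
    have : v = L u + d := by rw [hd]; abel
    rw [this]
    simp only [inner_add_left, inner_add_right, real_inner_comm (L u) d]
    ring
  constructor
  · intro h
    have key : ∀ w₁ w₂ : EuclideanSpace ℝ (Fin m),
        lam w₂ * ⟪d, L w₁⟫ + lam w₁ * ⟪d, L w₂⟫ + lam w₁ * lam w₂ * ⟪d, d⟫ = 0 := by
      intro w₁ w₂
      have h1 := h w₁ w₂
      rw [expand, hiso w₁ w₂] at h1
      linarith
    constructor
    · have h2 := key u u
      rw [hu] at h2
      rw [hvv, hiso u u]
      linarith
    · intro a ha
      have h3 := key u a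
      rw [hu, ha] at h3
      linarith
  · rintro ⟨h1, h2⟩ w₁ w₂
    have hker : ∀ w : EuclideanSpace ℝ (Fin m), ⟪d, L w⟫ = lam w * ⟪d, L u⟫ := by
      intro w
      have hz : lam (w - lam w • u) = 0 := by simp [hu]
      have := h2 _ hz
      rw [map_sub, map_smul, inner_sub_right, real_inner_smul_right] at this
      linarith
    rw [expand, hiso w₁ w₂, hker w₁, hker w₂]
    have hdd : 2 * ⟪d, L u⟫ + ⟪d, d⟫ = 0 := by
      rw [h1, hiso u u] at hvv; linarith
    linear_combination (-(lam w₁ * lam w₂)) * hdd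
end

section
/- Assume g(a, b) = ⟨L₀ a, L₀ b⟩ for all a, b ∈ ker λ. Let u₀ ∈ ker λ be the g-orthogonal projection of u onto ker λ, i.e. the unique u₀ ∈ ker λ with g(u − u₀, a) = 0 for all a ∈ ker λ, and let P := L₀(ker λ). For v ∈ ℝⁿ, define L := L₀ + (v − L₀(u)) ⊗ λ. Then L is g-isometric (g(w₁, w₂) = ⟨L w₁, L w₂⟩ for all w₁, w₂ ∈ ℝ^m) if and only if v = L₀(u₀) + τ for some τ ∈ ℝⁿ orthogonal to P with ‖τ‖² = g(u, u) − g(u₀, u₀). -/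
open scoped RealInnerProductSpace

/-!
Writing `w = (w - λ(w) u) + λ(w) u` splits `ℝ^m = ker λ ⊕ ℝu`, and `L` sends the two pieces to
`L₀(w - λ(w) u)` and `λ(w) v`. Since `L₀` is already isometric on `ker λ`, the bilinear form
`g - L*⟨·,·⟩` vanishes iff `⟨v, L₀ a⟩ = g(u, a)` on `ker λ` and `‖v‖² = g(u, u)`. As
`g(u, a) = g(u₀, a) = ⟨L₀ u₀, L₀ a⟩` there, the first condition says exactly that `τ := v - L₀ u₀`
is orthogonal to `P`, and then Pythagoras turns the second into `‖τ‖² = g(u, u) - g(u₀, u₀)`.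
-/

section

variable {R V : Type*} [CommRing R] [AddCommGroup V] [Module R V]

theorem LinearMap.eq_zero_of_vanishes_on_ker_sup_span (B : V →ₗ[R] V →ₗ[R] R) {lam : V →ₗ[R] R} {u : V}
    (hu : lam u = 1) (hkk : ∀ a b, lam a = 0 → lam b = 0 → B a b = 0)
    (hku : ∀ a, lam a = 0 → B a u = 0) (huk : ∀ a, lam a = 0 → B u a = 0) (huu : B u u = 0) :
    B = 0 := by
  have hsum : ∀ a b (s t : R), lam a = 0 → lam b = 0 → B (a + s • u) (b + t • u) = 0 :=
    fun a b s t ha hb => by simp [hkk a b ha hb, hku a ha, huk b hb, huu]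
  have hker : ∀ w, lam (w - lam w • u) = 0 := fun w => by simp [hu]
  ext w₁ w₂
  simpa using hsum _ _ (lam w₁) (lam w₂) (hker w₁) (hker w₂)

end

section

variable {V F : Type*} [AddCommGroup V] [Module ℝ V] [NormedAddCommGroup F] [InnerProductSpace ℝ F]

theorem isometric_iff_of_isometric_on_ker (g : V →ₗ[ℝ] V →ₗ[ℝ] ℝ)
    (hg_symm : ∀ a b, g a b = g b a) {lam : V →ₗ[ℝ] ℝ} {u : V} (hu : lam u = 1) (M : V →ₗ[ℝ] F)
    (hM : ∀ a b, lam a = 0 → lam b = 0 → g a b = ⟪M a, M b⟫) :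
    (∀ w₁ w₂, g w₁ w₂ = ⟪M w₁, M w₂⟫) ↔
      (∀ a, lam a = 0 → g u a = ⟪M u, M a⟫) ∧ g u u = ⟪M u, M u⟫ := by
  refine ⟨fun h => ⟨fun a _ => h u a, h u u⟩, fun ⟨hker, huu⟩ => ?_⟩
  have hzero : g - (innerₗ F).compl₁₂ M M = 0 := by
    refine LinearMap.eq_zero_of_vanishes_on_ker_sup_span _ hu ?_ ?_ ?_ ?_ <;>
      simp only [LinearMap.sub_apply, LinearMap.compl₁₂_apply, innerₗ_apply_apply, sub_eq_zero]
    · exact hM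
    · exact fun a ha => by rw [hg_symm, real_inner_comm, hker a ha]
    · exact hker
    · exact huu
  intro w₁ w₂
  simpa [sub_eq_zero] using LinearMap.congr_fun₂ hzero w₁ w₂

theorem pairing_eq_iff_orthogonal_and_norm_sq (g : V →ₗ[ℝ] V →ₗ[ℝ] ℝ) {lam : V →ₗ[ℝ] ℝ} {u u₀ : V}
    (hu₀ : lam u₀ = 0) (hu₀_proj : ∀ a, lam a = 0 → g (u - u₀) a = 0) (L₀ : V →ₗ[ℝ] F)
    (hiso₀ : ∀ a b, lam a = 0 → lam b = 0 → g a b = ⟪L₀ a, L₀ b⟫) (τ : F) :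
    ((∀ a, lam a = 0 → g u a = ⟪L₀ u₀ + τ, L₀ a⟫) ∧ g u u = ⟪L₀ u₀ + τ, L₀ u₀ + τ⟫) ↔
      (∀ a, lam a = 0 → ⟪τ, L₀ a⟫ = 0) ∧ ‖τ‖ ^ 2 = g u u - g u₀ u₀ := by
  have hgu : ∀ a, lam a = 0 → g u a = ⟪L₀ u₀, L₀ a⟫ := fun a ha => by
    rw [← hiso₀ u₀ a hu₀ ha, ← sub_eq_zero, ← LinearMap.sub_apply, ← map_sub, hu₀_proj a ha]
  have horth_iff : (∀ a, lam a = 0 → g u a = ⟪L₀ u₀ + τ, L₀ a⟫) ↔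
      ∀ a, lam a = 0 → ⟪τ, L₀ a⟫ = 0 :=
    forall₂_congr fun a ha => by rw [hgu a ha, inner_add_left, left_eq_add]
  rw [horth_iff]
  refine and_congr_right fun horth => ?_
  have hpyth : ⟪L₀ u₀ + τ, L₀ u₀ + τ⟫ = g u₀ u₀ + ‖τ‖ ^ 2 := by
    rw [hiso₀ u₀ u₀ hu₀ hu₀, real_inner_add_add_self, real_inner_comm τ, horth u₀ hu₀,
      real_inner_self_eq_norm_sq τ]
    ring
  rw [hpyth]
  constructor <;> intro h <;> linarith

end

theorem formal_solution_isometric_iff_general {m n : ℕ}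
    (g : EuclideanSpace ℝ (Fin m) →ₗ[ℝ] EuclideanSpace ℝ (Fin m) →ₗ[ℝ] ℝ)
    (hg_symm : ∀ a b, g a b = g b a)
    (lam : EuclideanSpace ℝ (Fin m) →ₗ[ℝ] ℝ)
    (u : EuclideanSpace ℝ (Fin m)) (hu : lam u = 1)
    (u₀ : EuclideanSpace ℝ (Fin m)) (hu₀ : lam u₀ = 0)
    (hu₀_proj : ∀ a, lam a = 0 → g (u - u₀) a = 0)
    (L₀ : EuclideanSpace ℝ (Fin m) →ₗ[ℝ] EuclideanSpace ℝ (Fin n))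
    (hiso₀ : ∀ a b, lam a = 0 → lam b = 0 → g a b = ⟪L₀ a, L₀ b⟫)
    (v : EuclideanSpace ℝ (Fin n)) :
    (∀ w₁ w₂ : EuclideanSpace ℝ (Fin m),
        g w₁ w₂ = ⟪L₀ w₁ + lam w₁ • (v - L₀ u), L₀ w₂ + lam w₂ • (v - L₀ u)⟫)
      ↔ (∃ τ : EuclideanSpace ℝ (Fin n),
          (∀ a : EuclideanSpace ℝ (Fin m), lam a = 0 → ⟪τ, L₀ a⟫ = 0) ∧
          ‖τ‖ ^ 2 = g u u - g u₀ u₀ ∧ v = L₀ u₀ + τ) := by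
  set L := L₀ + lam.smulRight (v - L₀ u)
  have hLu : L u = v := by simp [L, hu]
  have hLker : ∀ a, lam a = 0 → L a = L₀ a := fun a ha => by simp [L, ha]
  have hiso : ∀ a b, lam a = 0 → lam b = 0 → g a b = ⟪L a, L b⟫ := fun a b ha hb => by
    rw [hLker a ha, hLker b hb, hiso₀ a b ha hb]
  calc _ ↔ ∀ w₁ w₂, g w₁ w₂ = ⟪L w₁, L w₂⟫ := Iff.rfl
    _ ↔ (∀ a, lam a = 0 → g u a = ⟪v, L₀ a⟫) ∧ g u u = ⟪v, v⟫ := by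
      rw [isometric_iff_of_isometric_on_ker g hg_symm hu L hiso, hLu]
      exact and_congr_left' (forall₂_congr fun a ha => by rw [hLker a ha])
    _ ↔ ∃ τ, ((∀ a, lam a = 0 → g u a = ⟪L₀ u₀ + τ, L₀ a⟫) ∧
          g u u = ⟪L₀ u₀ + τ, L₀ u₀ + τ⟫) ∧ v = L₀ u₀ + τ :=
      ⟨fun h => ⟨v - L₀ u₀, by rwa [add_sub_cancel], (add_sub_cancel _ _).symm⟩,
        fun ⟨_, h, hv⟩ => hv ▸ h⟩
    _ ↔ _ := by simp_rw [pairing_eq_iff_orthogonal_and_norm_sq g hu₀ hu₀_proj L₀ hiso₀, and_assoc]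

/-- Characterization of formal solutions of the isometric relation over a map which is
isometric in the hyperplane directions `ker λ`: with `g` an inner product on `ℝ^m`,
`λ(u) = 1`, `u₀` the `g`-orthogonal projection of `u` onto `ker λ`, `L₀` isometric on
`ker λ`, and `L = L₀ + (v − L₀(u)) ⊗ λ`, the map `L` is `g`-isometric if and only if
`v = L₀(u₀) + τ` with `τ` orthogonal to `P = L₀(ker λ)` and
`‖τ‖² = g(u,u) − g(u₀,u₀)`. -/
theorem formal_solution_isometric_iff {m n : ℕ}
    (g : EuclideanSpace ℝ (Fin m) →ₗ[ℝ] EuclideanSpace ℝ (Fin m) →ₗ[ℝ] ℝ)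
    (hg_symm : ∀ a b, g a b = g b a)
    (hg_pos : ∀ a, a ≠ 0 → 0 < g a a)
    (lam : EuclideanSpace ℝ (Fin m) →ₗ[ℝ] ℝ) (hlam : lam ≠ 0)
    (u : EuclideanSpace ℝ (Fin m)) (hu : lam u = 1)
    (u₀ : EuclideanSpace ℝ (Fin m)) (hu₀ : lam u₀ = 0)
    (hu₀_proj : ∀ a, lam a = 0 → g (u - u₀) a = 0)
    (L₀ : EuclideanSpace ℝ (Fin m) →ₗ[ℝ] EuclideanSpace ℝ (Fin n))
    (hiso₀ : ∀ a b, lam a = 0 → lam b = 0 → g a b = ⟪L₀ a, L₀ b⟫)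
    (v : EuclideanSpace ℝ (Fin n)) :
    (∀ w₁ w₂ : EuclideanSpace ℝ (Fin m),
        g w₁ w₂ = ⟪L₀ w₁ + lam w₁ • (v - L₀ u), L₀ w₂ + lam w₂ • (v - L₀ u)⟫)
      ↔ (∃ τ : EuclideanSpace ℝ (Fin n),
          (∀ a : EuclideanSpace ℝ (Fin m), lam a = 0 → ⟪τ, L₀ a⟫ = 0) ∧
          ‖τ‖ ^ 2 = g u u - g u₀ u₀ ∧ v = L₀ u₀ + τ) :=
  formal_solution_isometric_iff_general g hg_symm lam u hu u₀ hu₀ hu₀_proj L₀ hiso₀ v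
end

section
/- Let E be a real inner product space, P ⊆ E a finite-dimensional (hence closed, with orthogonal projection proj_P) subspace, and let v₀, w ∈ E with v₀ ∉ P. Then there exists a continuous path v : [0,1] → E such that: v(0) = v₀; proj_P(v(1)) = proj_P(w); ‖v(1)‖ = max(‖v₀‖, ‖w‖); for every t ∈ [0,1], min(‖v₀‖, ‖w‖) ≤ ‖v(t)‖ ≤ max(‖v₀‖, ‖w‖); and for every t ∈ [0,1], proj_P(v(t)) lies on the segment joining proj_P(v₀) to proj_P(w). -/
/-! Interpolate linearly both the projection `p t` onto `P`, from `proj_P v₀` to `proj_P w`, and the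
norm `r t`, from `‖v₀‖` to `max ‖v₀‖ ‖w‖`. By convexity of the norm `‖p t‖ ≤ r t`, so the missing
length `√(r t ^ 2 - ‖p t‖ ^ 2)` can be added along a fixed unit vector `u ∈ Pᗮ`; choosing `u` in
the direction of `v₀ - proj_P v₀`, which is nonzero since `v₀ ∉ P`, makes the path start at `v₀`. -/

open scoped RealInnerProductSpace

open AffineMap Set

section
variable {E : Type*} [NormedAddCommGroup E] [InnerProductSpace ℝ E]

theorem norm_add_sqrt_smul_of_inner_eq_zero {p u : E} {r : ℝ} (hpu : ⟪p, u⟫ = 0)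
    (hu : ‖u‖ = 1) (hpr : ‖p‖ ≤ r) : ‖p + √(r ^ 2 - ‖p‖ ^ 2) • u‖ = r := by
  have hr : 0 ≤ r := (norm_nonneg p).trans hpr
  have hsq : ‖p + √(r ^ 2 - ‖p‖ ^ 2) • u‖ ^ 2 = r ^ 2 := by
    rw [norm_add_sq_real, inner_smul_right, hpu, norm_smul, hu, Real.norm_of_nonneg (by positivity),
      mul_one, Real.sq_sqrt (by nlinarith [norm_nonneg p])]
    ring
  exact (pow_left_inj₀ (norm_nonneg _) hr two_ne_zero).1 hsq

theorem norm_lineMap_le (x y : E) {t : ℝ} (ht : t ∈ Icc (0 : ℝ) 1) :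
    ‖lineMap x y t‖ ≤ lineMap ‖x‖ ‖y‖ t := by
  simpa only [lineMap_apply_module, smul_eq_mul] using
    (convexOn_norm convex_univ).2 (mem_univ x) (mem_univ y) (sub_nonneg.2 ht.2) ht.1 (by ring)

namespace Submodule

variable (K : Submodule ℝ E) [K.HasOrthogonalProjection]

theorem starProjection_add_of_mem_orthogonal {p q : E} (hp : p ∈ K) (hq : q ∈ Kᗮ) :
    K.starProjection (p + q) = p := by
  rw [map_add, starProjection_eq_self_iff.2 hp, (K.starProjection_apply_eq_zero_iff).2 hq,
    add_zero]

theorem exists_unit_mem_orthogonal_eq_starProjection_add {v : E} (hv : v ∉ K) :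
    ∃ u ∈ Kᗮ, ‖u‖ = 1 ∧ v = K.starProjection v + √(‖v‖ ^ 2 - ‖K.starProjection v‖ ^ 2) • u := by
  set q := Kᗮ.starProjection v
  have hq : q ≠ 0 := fun h => hv <| by
    rwa [starProjection_apply_eq_zero_iff, orthogonal_orthogonal] at h
  refine ⟨‖q‖⁻¹ • q, Kᗮ.smul_mem _ (Kᗮ.starProjection_apply_mem v), norm_smul_inv_norm hq, ?_⟩
  rw [norm_sq_eq_add_norm_sq_starProjection v K, add_sub_cancel_left, Real.sqrt_sq (norm_nonneg _),
    smul_smul, mul_inv_cancel₀ (norm_ne_zero_iff.2 hq), one_smul]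
  simp [q]

end Submodule

end

/-- The homotopy lemma: in a real inner product space `E`, given a finite-dimensional
subspace `P`, `v₀ ∉ P` and `w ∈ E`, there is a continuous path `v : [0,1] → E` starting at
`v₀`, ending at a point whose orthogonal projection on `P` is that of `w` and whose norm is
`max(‖v₀‖, ‖w‖)`, whose norm stays between `min(‖v₀‖, ‖w‖)` and `max(‖v₀‖, ‖w‖)`, and whose
projection on `P` stays on the segment joining `proj_P v₀` to `proj_P w`. -/
theorem homotopy_lemma {E : Type*} [NormedAddCommGroup E] [InnerProductSpace ℝ E]
    (P : Submodule ℝ E) [FiniteDimensional ℝ P]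
    (v₀ w : E) (hv₀ : v₀ ∉ P) :
    ∃ v : ℝ → E,
      ContinuousOn v (Set.Icc 0 1) ∧
      v 0 = v₀ ∧
      P.orthogonalProjectionOnto (v 1) = P.orthogonalProjectionOnto w ∧
      ‖v 1‖ = max ‖v₀‖ ‖w‖ ∧
      (∀ t ∈ Set.Icc (0:ℝ) 1, min ‖v₀‖ ‖w‖ ≤ ‖v t‖ ∧ ‖v t‖ ≤ max ‖v₀‖ ‖w‖) ∧
      (∀ t ∈ Set.Icc (0:ℝ) 1,
        (P.orthogonalProjectionOnto (v t) : E) ∈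
          segment ℝ (P.orthogonalProjectionOnto v₀ : E) (P.orthogonalProjectionOnto w : E)) := by
  obtain ⟨u, huP, hu, hv₀u⟩ := P.exists_unit_mem_orthogonal_eq_starProjection_add hv₀
  set M := max ‖v₀‖ ‖w‖
  let p (t : ℝ) : E := lineMap (P.starProjection v₀) (P.starProjection w) t
  let r (t : ℝ) : ℝ := lineMap ‖v₀‖ M t
  have hr : ∀ t ∈ Icc (0 : ℝ) 1, r t ∈ Icc ‖v₀‖ M := fun t ht => by
    rw [← segment_eq_Icc (le_max_left _ _)]
    exact lineMap_mem_segment ℝ _ _ ht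
  have hpP : ∀ t, p t ∈ P := fun t =>
    lineMap_mem (Q := P.toAffineSubspace) t (P.starProjection_apply_mem v₀)
      (P.starProjection_apply_mem w)
  have hpr : ∀ t ∈ Icc (0 : ℝ) 1, ‖p t‖ ≤ r t := fun t ht =>
    (norm_lineMap_le _ _ ht).trans <| lineMap_mono_endpoints (P.norm_starProjection_apply_le v₀)
      ((P.norm_starProjection_apply_le w).trans (le_max_right _ _)) ht.1 ht.2
  have hproj : ∀ t, P.starProjection (p t + √(r t ^ 2 - ‖p t‖ ^ 2) • u) = p t := fun t =>
    P.starProjection_add_of_mem_orthogonal (hpP t) (Pᗮ.smul_mem _ huP)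
  have hnorm : ∀ t ∈ Icc (0 : ℝ) 1, ‖p t + √(r t ^ 2 - ‖p t‖ ^ 2) • u‖ = r t := fun t ht =>
    norm_add_sqrt_smul_of_inner_eq_zero (P.inner_right_of_mem_orthogonal (hpP t) huP) hu (hpr t ht)
  refine ⟨fun t => p t + √(r t ^ 2 - ‖p t‖ ^ 2) • u, by fun_prop, ?_, ?_, ?_, ?_, ?_⟩
  · simpa [p, r] using hv₀u.symm
  · exact Subtype.ext <| by simpa [p] using hproj 1
  · simpa [r] using hnorm 1 ⟨zero_le_one, le_rfl⟩
  · intro t ht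
    rw [hnorm t ht]
    exact ⟨(min_le_left _ _).trans (hr t ht).1, (hr t ht).2⟩
  · intro t ht
    simp only [Submodule.coe_orthogonalProjectionOnto_apply, hproj]
    exact lineMap_mem_segment ℝ _ _ ht
end

section
/- For every complex number w with |w| < 1 there exists a continuous 1-periodic function φ : ℝ → ℝ such that ∫₀¹ exp(i·φ(t)) dt = w. That is, every point of the open unit disk is the average of a loop with values in the unit circle. -/
/-!
The triangle wave `τ` of period `1` runs linearly from `-1` up to `1` and back, so its values are
uniformly distributed on `[-1, 1]` and the average of `exp (i x τ)` is `sinc x`. As `sinc` takes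
every value in `[0, 1]` on `[0, π]`, choosing `sinc x = ‖w‖` makes the loop `arg w + x τ`
average to `‖w‖ exp (i arg w) = w`.
-/

open Real Complex intervalIntegral

noncomputable def triangleWave (t : ℝ) : ℝ := 2 / π * arccos (Real.cos (2 * π * t)) - 1

@[fun_prop]
theorem continuous_triangleWave : Continuous triangleWave := by
  unfold triangleWave; fun_prop

theorem triangleWave_periodic : Function.Periodic triangleWave 1 := by
  intro t
  simp only [triangleWave, mul_add, mul_one, Real.cos_add_two_pi]

theorem triangleWave_of_mem_Icc_zero_half {t : ℝ} (ht : t ∈ Set.Icc 0 (1 / 2)) :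
    triangleWave t = 4 * t - 1 := by
  have hπ := pi_pos
  rw [triangleWave, arccos_cos (by nlinarith [ht.1]) (by nlinarith [ht.2])]
  field_simp
  ring

theorem triangleWave_of_mem_Icc_half_one {t : ℝ} (ht : t ∈ Set.Icc (1 / 2) 1) :
    triangleWave t = 3 - 4 * t := by
  have hπ := pi_pos
  rw [triangleWave, ← Real.cos_two_pi_sub,
    arccos_cos (by nlinarith [ht.2]) (by nlinarith [ht.1])]
  field_simp
  ring

theorem integral_comp_triangleWave {E : Type*} [NormedAddCommGroup E] [NormedSpace ℝ E]
    {g : ℝ → E} (hg : Continuous g) :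
    ∫ t in (0 : ℝ)..1, g (triangleWave t) = (2 : ℝ)⁻¹ • ∫ s in (-1 : ℝ)..1, g s := by
  have hint : ∀ a b : ℝ,
      IntervalIntegrable (fun t => g (triangleWave t)) MeasureTheory.volume a b :=
    fun a b => (hg.comp continuous_triangleWave).intervalIntegrable a b
  have h₁ : ∫ t in (0 : ℝ)..1 / 2, g (triangleWave t) = ∫ t in (0 : ℝ)..1 / 2, g (4 * t - 1) :=
    integral_congr fun t ht => by
      rw [Set.uIcc_of_le (by norm_num)] at ht
      simp only [triangleWave_of_mem_Icc_zero_half ht]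
  have h₂ : ∫ t in (1 / 2 : ℝ)..1, g (triangleWave t) = ∫ t in (1 / 2 : ℝ)..1, g (3 - 4 * t) :=
    integral_congr fun t ht => by
      rw [Set.uIcc_of_le (by norm_num)] at ht
      simp only [triangleWave_of_mem_Icc_half_one ht]
  rw [← integral_add_adjacent_intervals (hint 0 (1 / 2)) (hint (1 / 2) 1), h₁, h₂,
    integral_comp_mul_sub g (by norm_num), integral_comp_sub_mul g (by norm_num)]
  norm_num
  module

theorem integral_exp_mul_triangleWave_mul_I (x : ℝ) :
    ∫ t in (0 : ℝ)..1, cexp (x * triangleWave t * I) = sinc x := by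
  rcases eq_or_ne x 0 with rfl | hx
  · simp
  rw [integral_comp_triangleWave (g := fun s : ℝ => cexp (x * s * I)) (by fun_prop)]
  have hscale := integral_comp_mul_left (fun s : ℝ => cexp (s * I)) hx (a := -1) (b := 1)
  push_cast at hscale
  simp only [mul_neg, mul_one] at hscale
  rw [hscale, integral_exp_mul_I_eq_sinc, smul_smul, Complex.real_smul]
  have hxC : (x : ℂ) ≠ 0 := ofReal_ne_zero.mpr hx
  push_cast
  field_simp

theorem exists_sinc_eq {r : ℝ} (h₀ : 0 ≤ r) (h₁ : r ≤ 1) : ∃ x, sinc x = r := by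
  obtain ⟨x, -, hx⟩ := intermediate_value_Icc' pi_pos.le continuous_sinc.continuousOn
    (show r ∈ Set.Icc (sinc π) (sinc 0) by simpa [sinc_of_ne_zero pi_ne_zero] using ⟨h₀, h₁⟩)
  exact ⟨x, hx⟩

/-- Every point of the open unit disk is the average of a loop with values in the unit
circle: for `|w| < 1` there is a continuous `1`-periodic `φ : ℝ → ℝ` with
`∫₀¹ exp(i φ(t)) dt = w`. -/
theorem average_of_circle_loop (w : ℂ) (hw : ‖w‖ < 1) :
    ∃ φ : ℝ → ℝ, Continuous φ ∧ (∀ t : ℝ, φ (t + 1) = φ t) ∧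
      (∫ t in (0:ℝ)..1, Complex.exp (Complex.I * (φ t : ℂ))) = w := by
  obtain ⟨x, hx⟩ := exists_sinc_eq (norm_nonneg w) hw.le
  refine ⟨fun t => arg w + x * triangleWave t, by fun_prop,
    fun t => by simp only [triangleWave_periodic t], ?_⟩
  calc ∫ t in (0:ℝ)..1, cexp (I * ↑(arg w + x * triangleWave t))
      = ∫ t in (0:ℝ)..1, cexp (arg w * I) * cexp (x * triangleWave t * I) :=
        integral_congr fun t _ => by rw [← Complex.exp_add]; push_cast; ring_nf
    _ = ‖w‖ * cexp (arg w * I) := by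
        rw [integral_const_mul, integral_exp_mul_triangleWave_mul_I, hx, mul_comm]
    _ = w := norm_mul_exp_arg_mul_I w
end

section
/- Let 0 ≤ r₁ < r₂ be real numbers and let w ∈ ℂ with |w| < r₂. Then there exists a continuous 1-periodic loop γ : ℝ → ℂ such that r₁ < |γ(t)| < r₂ for every t ∈ ℝ and ∫₀¹ γ(t) dt = w. That is, every point of the open disk of radius r₂ is the average of a loop with values in the open annulus A(r₁, r₂). -/
/-!
Pick a radius `ρ` with `max r₁ ‖w‖ < ρ < r₂` and run once around the circle of radius `ρ`, but
parametrised through the Blaschke factor `B(z) = (z + a) / (1 + conj a * z)` with `a = w / ρ`: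
`t ↦ ρ B(e^{2πit})`. Since `B` maps the unit circle to itself, the loop stays on the circle of
radius `ρ`, and since `B` is holomorphic on the closed unit disc, the mean value property gives
average `ρ B(0) = ρ a = w`.
-/

open Complex ComplexConjugate Metric Real

noncomputable def blaschkeFactor (a z : ℂ) : ℂ := (z + a) / (1 + conj a * z)

section BlaschkeFactor

variable {a z : ℂ}

@[simp]
lemma blaschkeFactor_zero (a : ℂ) : blaschkeFactor a 0 = a := by
  simp [blaschkeFactor]

lemma one_add_conj_mul_ne_zero (ha : ‖a‖ < 1) (hz : ‖z‖ ≤ 1) : 1 + conj a * z ≠ 0 := by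
  intro h
  have : ‖conj a * z‖ < 1 := by
    rw [norm_mul, Complex.norm_conj]
    calc ‖a‖ * ‖z‖ ≤ ‖a‖ * 1 := by gcongr
      _ < 1 := by rwa [mul_one]
  rw [eq_neg_of_add_eq_zero_right h, norm_neg, norm_one] at this
  exact lt_irrefl 1 this

lemma differentiableOn_blaschkeFactor (ha : ‖a‖ < 1) :
    DifferentiableOn ℂ (blaschkeFactor a) (closedBall 0 1) := fun _ hz ↦
  ((differentiableAt_id.add_const a).div ((differentiableAt_id.const_mul _).const_add 1)
    (one_add_conj_mul_ne_zero ha (mem_closedBall_zero_iff.mp hz))).differentiableWithinAt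

lemma continuous_blaschkeFactor_comp {γ : ℝ → ℂ} (ha : ‖a‖ < 1) (hγ : Continuous γ)
    (hγ₁ : ∀ t, ‖γ t‖ ≤ 1) : Continuous fun t ↦ blaschkeFactor a (γ t) :=
  (hγ.add continuous_const).div (continuous_const.add (continuous_const.mul hγ))
    fun t ↦ one_add_conj_mul_ne_zero ha (hγ₁ t)

/-- On the unit circle `z * conj (1 + conj a * z) = z + a`, so numerator and denominator of the
Blaschke factor have the same norm. -/
lemma norm_blaschkeFactor_of_norm_eq_one (ha : ‖a‖ < 1) (hz : ‖z‖ = 1) :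
    ‖blaschkeFactor a z‖ = 1 := by
  have hden := one_add_conj_mul_ne_zero ha hz.le
  have key : z * conj (1 + conj a * z) = z + a := by
    rw [map_add, map_one, map_mul, conj_conj, mul_add, mul_one, ← mul_assoc, mul_comm z a,
      mul_assoc, mul_conj, normSq_eq_norm_sq, hz]
    simp
  have hnorm : ‖1 + conj a * z‖ = ‖z + a‖ := by
    rw [← key, norm_mul, hz, one_mul, Complex.norm_conj]
  rw [blaschkeFactor, norm_div, ← hnorm, div_self (norm_ne_zero_iff.mpr hden)]

lemma circleAverage_blaschkeFactor (ha : ‖a‖ < 1) :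
    circleAverage (blaschkeFactor a) 0 1 = a := by
  have hdiff : DiffContOnCl ℂ (blaschkeFactor a) (ball 0 |1|) := by
    rw [abs_one]
    exact (differentiableOn_blaschkeFactor ha).diffContOnCl_ball subset_rfl
  rw [hdiff.circleAverage, blaschkeFactor_zero]

end BlaschkeFactor

lemma circleAverage_eq_intervalIntegral_zero_one {E : Type*} [NormedAddCommGroup E]
    [NormedSpace ℝ E] (f : ℂ → E) (c : ℂ) (R : ℝ) :
    circleAverage f c R = ∫ t in (0 : ℝ)..1, f (circleMap c R (2 * π * t)) := by
  rw [intervalIntegral.integral_comp_mul_left (fun θ ↦ f (circleMap c R θ)) two_pi_pos.ne',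
    mul_zero, mul_one, circleAverage_def]

theorem exists_loop_sphere_integral_eq {ρ : ℝ} {w : ℂ} (hw : ‖w‖ < ρ) :
    ∃ γ : ℝ → ℂ, Continuous γ ∧ Function.Periodic γ 1 ∧ (∀ t, ‖γ t‖ = ρ) ∧
      ∫ t in (0 : ℝ)..1, γ t = w := by
  have hρ : 0 < ρ := (norm_nonneg w).trans_lt hw
  set a : ℂ := w / ρ
  have ha : ‖a‖ < 1 := by
    rwa [norm_div, norm_real, norm_of_nonneg hρ.le, div_lt_one hρ]
  have hunit : ∀ t : ℝ, ‖circleMap 0 1 (2 * π * t)‖ = 1 := fun t ↦ by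
    rw [norm_circleMap_zero, abs_one]
  refine ⟨fun t ↦ ρ * blaschkeFactor a (circleMap 0 1 (2 * π * t)), ?_, fun t ↦ ?_,
    fun t ↦ ?_, ?_⟩
  · exact continuous_const.mul <| continuous_blaschkeFactor_comp ha
      ((continuous_circleMap 0 1).comp (continuous_const_mul _)) fun t ↦ (hunit t).le
  · simp only [mul_add, mul_one, periodic_circleMap 0 1 _]
  · rw [norm_mul, norm_blaschkeFactor_of_norm_eq_one ha (hunit t), mul_one, norm_real,
      norm_of_nonneg hρ.le]
  · rw [intervalIntegral.integral_const_mul, ← circleAverage_eq_intervalIntegral_zero_one,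
      circleAverage_blaschkeFactor ha, mul_div_cancel₀ _ (ofReal_ne_zero.mpr hρ.ne')]

theorem average_of_annulus_loop_general (r₁ r₂ : ℝ) (hr : r₁ < r₂)
    (w : ℂ) (hw : ‖w‖ < r₂) :
    ∃ γ : ℝ → ℂ, Continuous γ ∧ (∀ t : ℝ, γ (t + 1) = γ t) ∧
      (∀ t : ℝ, r₁ < ‖γ t‖ ∧ ‖γ t‖ < r₂) ∧
      (∫ t in (0:ℝ)..1, γ t) = w := by
  obtain ⟨ρ, hρ_gt, hρ_lt⟩ := exists_between (max_lt hr hw)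
  obtain ⟨γ, hγ, hper, hnorm, hint⟩ :=
    exists_loop_sphere_integral_eq ((le_max_right _ _).trans_lt hρ_gt)
  exact ⟨γ, hγ, hper, fun t ↦ ⟨hnorm t ▸ (le_max_left _ _).trans_lt hρ_gt, hnorm t ▸ hρ_lt⟩, hint⟩

/-- Every point of the open disk of radius `r₂` is the average of a loop with values in
the open annulus `A(r₁, r₂) = {z : r₁ < |z| < r₂}`. -/
theorem average_of_annulus_loop (r₁ r₂ : ℝ) (hr₁ : 0 ≤ r₁) (hr : r₁ < r₂)
    (w : ℂ) (hw : ‖w‖ < r₂) :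
    ∃ γ : ℝ → ℂ, Continuous γ ∧ (∀ t : ℝ, γ (t + 1) = γ t) ∧
      (∀ t : ℝ, r₁ < ‖γ t‖ ∧ ‖γ t‖ < r₂) ∧
      (∫ t in (0:ℝ)..1, γ t) = w :=
  average_of_annulus_loop_general r₁ r₂ hr w hw
end
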